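/- Let G be a finite connected graph and e an edge of G. Then gp(G)/2 ≤ gp(G − e) ≤ 2·gp(G); equivalently, gp(G) ≤ 2·gp(G − e) and gp(G − e) ≤ 2·gp(G). -/
import Mathlib


open SimpleGraph

/-- `S` is a *general position set* of `G`: no three distinct vertices of `S`
lie on a common shortest path (geodesic) of `G`. -/
def IsGPSet {V : Type*} (G : SimpleGraph V) (S : Set V) : Prop :=
  ∀ ⦃u v w : V⦄, u ∈ S → v ∈ S → w ∈ S → u ≠ v → u ≠ w → v ≠ w →
    ∀ p : G.Walk u v, p.IsPath → p.length = G.dist u v → w ∉ p.support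

/-- The *general position number* of `G`: the maximum cardinality of a
general position set. -/
noncomputable def gpNum {V : Type*} [Fintype V] (G : SimpleGraph V) : ℕ :=
  sSup {n : ℕ | ∃ S : Finset V, IsGPSet G ↑S ∧ S.card = n}

/-- The vertex-deleted subgraph `G - x`, induced on `V(G) \ {x}`. -/
def delVert {V : Type*} (G : SimpleGraph V) (x : V) : SimpleGraph {y : V // y ≠ x} :=
  G.comap Subtype.val

/-- On a geodesic, prefix and suffix at an intermediate vertex are geodesics. -/
private lemma geo_split {V : Type*} [DecidableEq V] {G : SimpleGraph V} {x y w : V} (p : G.Walk x y)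
    (hlen : p.length = G.dist x y) (hw : w ∈ p.support) :
    (p.takeUntil w hw).length = G.dist x w ∧ (p.dropUntil w hw).length = G.dist w y := by
  have hsum : (p.takeUntil w hw).length + (p.dropUntil w hw).length = p.length := by
    conv_rhs => rw [← p.take_spec hw]
    rw [SimpleGraph.Walk.length_append]
  have h1 := SimpleGraph.dist_le (p.takeUntil w hw)
  have h2 := SimpleGraph.dist_le (p.dropUntil w hw)
  obtain ⟨q1, hq1⟩ := (p.takeUntil w hw).reachable.exists_walk_length_eq_dist
  obtain ⟨q2, hq2⟩ := (p.dropUntil w hw).reachable.exists_walk_length_eq_dist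
  have h3 : G.dist x y ≤ G.dist x w + G.dist w y := by
    rw [← hq1, ← hq2, ← SimpleGraph.Walk.length_append]
    exact SimpleGraph.dist_le _
  omega

/-- Distance additivity along a geodesic. -/
private lemma geo_add {V : Type*} [DecidableEq V] {G : SimpleGraph V} {x y w : V} (p : G.Walk x y)
    (hlen : p.length = G.dist x y) (hw : w ∈ p.support) :
    G.dist x w + G.dist w y = G.dist x y := by
  obtain ⟨h1, h2⟩ := geo_split p hlen hw
  have hsum : (p.takeUntil w hw).length + (p.dropUntil w hw).length = p.length := by
    conv_rhs => rw [← p.take_spec hw]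
    rw [SimpleGraph.Walk.length_append]
  omega

/-- If a geodesic from `x` to `y` uses the edge `uv`, then it passes `u` then `v`
(or `v` then `u`), giving strict distance relations at the endpoints. -/
private lemma geo_orient {V : Type*} [DecidableEq V] {G : SimpleGraph V} {x y u v : V} (huv : G.Adj u v)
    (p : G.Walk x y) (hlen : p.length = G.dist x y) (he : s(u, v) ∈ p.edges) :
    (G.dist x u + 1 = G.dist x v ∧ G.dist v y + 1 = G.dist u y) ∨
    (G.dist x v + 1 = G.dist x u ∧ G.dist u y + 1 = G.dist v y) := by
  have hu : u ∈ p.support := p.fst_mem_support_of_mem_edges he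
  have hv : v ∈ p.support := p.snd_mem_support_of_mem_edges he
  have hd1 : G.dist u v = 1 := SimpleGraph.dist_eq_one_iff_adj.mpr huv
  have hd1' : G.dist v u = 1 := by rw [SimpleGraph.dist_comm]; exact hd1
  obtain ⟨htu, hdu⟩ := geo_split p hlen hu
  have haddu : G.dist x u + G.dist u y = G.dist x y := geo_add p hlen hu
  have haddv : G.dist x v + G.dist v y = G.dist x y := geo_add p hlen hv
  -- locate v relative to u
  have hv' : v ∈ (p.takeUntil u hu).support ∨ v ∈ (p.dropUntil u hu).support := by
    have := hv
    conv at this => rw [← p.take_spec hu]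
    rcases (SimpleGraph.Walk.mem_support_append_iff _ _).mp this with h | h
    · exact Or.inl h
    · exact Or.inr h
  rcases hv' with h | h
  · -- v on the prefix: order is x … v … u … y
    have := geo_add (p.takeUntil u hu) htu h
    -- dist x v + dist v u = dist x u
    right
    omega
  · -- v on the suffix: order is x … u … v … y
    have := geo_add (p.dropUntil u hu) hdu h
    -- dist u v + dist v y = dist u y
    left
    omega

/-- If `x` and `y` lie in the same class w.r.t. the edge `uv`, then no geodesic
between them uses the edge, hence distance in `G - uv` equals distance in `G`. -/
private lemma dist_del_eq {V : Type*} [DecidableEq V] {G : SimpleGraph V} {u v x y : V} (huv : G.Adj u v)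
    (hr : G.Reachable x y)
    (hcl : G.dist x u < G.dist x v ↔ G.dist y u < G.dist y v) :
    (G.deleteEdges {s(u, v)}).dist x y = G.dist x y := by
  obtain ⟨q, hq⟩ := hr.exists_walk_length_eq_dist
  have hne : ∀ e ∈ q.edges, e ∉ ({s(u, v)} : Set (Sym2 V)) := by
    intro e heq hmem
    rw [Set.mem_singleton_iff] at hmem
    subst hmem
    have hyvu : G.dist y v = G.dist v y := SimpleGraph.dist_comm
    have hyuu : G.dist y u = G.dist u y := SimpleGraph.dist_comm
    rcases geo_orient huv q hq heq with ⟨h1, h2⟩ | ⟨h1, h2⟩ <;> omega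
  have hle : (G.deleteEdges {s(u, v)}).dist x y ≤ G.dist x y := by
    have := SimpleGraph.dist_le (q.toDeleteEdges {s(u, v)} hne)
    rwa [SimpleGraph.Walk.length_transfer, hq] at this
  have hr' : (G.deleteEdges {s(u, v)}).Reachable x y := ⟨q.toDeleteEdges {s(u, v)} hne⟩
  obtain ⟨p', hp'⟩ := hr'.exists_walk_length_eq_dist
  have hge : G.dist x y ≤ (G.deleteEdges {s(u, v)}).dist x y := by
    have hsub : ∀ e ∈ p'.edges, e ∈ G.edgeSet := fun e hh =>
      SimpleGraph.edgeSet_mono (SimpleGraph.deleteEdges_le _)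
        (SimpleGraph.Walk.edges_subset_edgeSet p' hh)
    have := SimpleGraph.dist_le (p'.transfer G hsub)
    rwa [SimpleGraph.Walk.length_transfer, hp'] at this
  omega

/-- Direction 1: a same-class subset of a gp set of `G` is a gp set of `G - uv`. -/
private lemma gp_del_of_gp {V : Type*} [DecidableEq V] {G : SimpleGraph V} (hG : G.Connected) {u v : V}
    (huv : G.Adj u v) {S T : Set V} (hS : IsGPSet G S) (hTS : T ⊆ S)
    (hcl : ∀ x ∈ T, ∀ y ∈ T, (G.dist x u < G.dist x v ↔ G.dist y u < G.dist y v)) :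
    IsGPSet (G.deleteEdges {s(u, v)}) T := by
  intro x y z hx hy hz hxy hxz hyz p hpath hplen
  have hd : (G.deleteEdges {s(u, v)}).dist x y = G.dist x y :=
    dist_del_eq huv (hG.preconnected x y) (hcl x hx y hy)
  have hsub : ∀ e ∈ p.edges, e ∈ G.edgeSet := fun e hh =>
    SimpleGraph.edgeSet_mono (SimpleGraph.deleteEdges_le _)
      (SimpleGraph.Walk.edges_subset_edgeSet p hh)
  have hres := hS (hTS hx) (hTS hy) (hTS hz) hxy hxz hyz (p.transfer G hsub)
    (hpath.transfer hsub) (by rw [SimpleGraph.Walk.length_transfer, hplen, hd])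
  rwa [SimpleGraph.Walk.support_transfer] at hres

/-- Direction 2: a same-class subset of a gp set of `G - uv` is a gp set of `G`. -/
private lemma gp_of_gp_del {V : Type*} [DecidableEq V] {G : SimpleGraph V} (hG : G.Connected) {u v : V}
    (huv : G.Adj u v) {S T : Set V} (hS : IsGPSet (G.deleteEdges {s(u, v)}) S) (hTS : T ⊆ S)
    (hcl : ∀ x ∈ T, ∀ y ∈ T, (G.dist x u < G.dist x v ↔ G.dist y u < G.dist y v)) :
    IsGPSet G T := by
  intro x y z hx hy hz hxy hxz hyz p hpath hplen
  by_cases he : s(u, v) ∈ p.edges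
  · exfalso
    have hyvu : G.dist y v = G.dist v y := SimpleGraph.dist_comm
    have hyuu : G.dist y u = G.dist u y := SimpleGraph.dist_comm
    have hclxy := hcl x hx y hy
    rcases geo_orient huv p hplen he with ⟨h1, h2⟩ | ⟨h1, h2⟩ <;> omega
  · have hne : ∀ e ∈ p.edges, e ∉ ({s(u, v)} : Set (Sym2 V)) := by
      intro e heq hmem
      rw [Set.mem_singleton_iff] at hmem
      subst hmem
      exact he heq
    have hd : (G.deleteEdges {s(u, v)}).dist x y = G.dist x y :=
      dist_del_eq huv (hG.preconnected x y) (hcl x hx y hy)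
    have hsub' : ∀ e ∈ p.edges, e ∈ (G.deleteEdges {s(u, v)}).edgeSet := by
      intro e he'
      rw [SimpleGraph.edgeSet_deleteEdges]
      exact ⟨p.edges_subset_edgeSet he', hne e he'⟩
    have hres := hS (hTS hx) (hTS hy) (hTS hz) hxy hxz hyz (p.transfer _ hsub')
      (hpath.transfer hsub') (by rw [SimpleGraph.Walk.length_transfer, hplen, hd])
    rwa [SimpleGraph.Walk.support_transfer] at hres

private lemma gpNum_bddAbove {V : Type*} [Fintype V] (G : SimpleGraph V) :
    BddAbove {n : ℕ | ∃ S : Finset V, IsGPSet G ↑S ∧ S.card = n} := by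
  refine ⟨Fintype.card V, ?_⟩
  rintro n ⟨S, -, rfl⟩
  exact le_trans (Finset.card_le_univ S) (le_of_eq Finset.card_univ)

private lemma gpNum_spec {V : Type*} [Fintype V] (G : SimpleGraph V) :
    ∃ S : Finset V, IsGPSet G ↑S ∧ S.card = gpNum G := by
  have hne : {n : ℕ | ∃ S : Finset V, IsGPSet G ↑S ∧ S.card = n}.Nonempty := by
    refine ⟨0, ∅, ?_, Finset.card_empty⟩
    intro a b c ha
    simp at ha
  exact Nat.sSup_mem hne (gpNum_bddAbove G)

private lemma card_le_gpNum {V : Type*} [Fintype V] {G : SimpleGraph V} {S : Finset V}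
    (hS : IsGPSet G ↑S) : S.card ≤ gpNum G :=
  le_csSup (gpNum_bddAbove G) ⟨S, hS, rfl⟩

/-- If `e = uv` is an edge of a finite connected graph `G`, then
`gp(G)/2 ≤ gp(G - e) ≤ 2·gp(G)`, i.e. `gp(G) ≤ 2·gp(G - e)` and
`gp(G - e) ≤ 2·gp(G)`. -/
theorem stmt_15 {V : Type*} [Fintype V] [DecidableEq V] (G : SimpleGraph V)
    (hG : G.Connected) (u v : V) (huv : G.Adj u v) :
    gpNum G ≤ 2 * gpNum (G.deleteEdges {s(u, v)}) ∧
    gpNum (G.deleteEdges {s(u, v)}) ≤ 2 * gpNum G := by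
  constructor
  · obtain ⟨S, hS, hcard⟩ := gpNum_spec G
    set T1 := S.filter (fun s => G.dist s u < G.dist s v) with hT1
    set T2 := S.filter (fun s => ¬ G.dist s u < G.dist s v) with hT2
    have hmem1 : ∀ x ∈ (T1 : Set V), x ∈ (S : Set V) ∧ G.dist x u < G.dist x v := by
      intro x hx
      simp only [hT1, Finset.coe_filter, Set.mem_setOf_eq] at hx
      exact ⟨hx.1, hx.2⟩
    have hmem2 : ∀ x ∈ (T2 : Set V), x ∈ (S : Set V) ∧ ¬ G.dist x u < G.dist x v := by
      intro x hx
      simp only [hT2, Finset.coe_filter, Set.mem_setOf_eq] at hx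
      exact ⟨hx.1, hx.2⟩
    have h1 : IsGPSet (G.deleteEdges {s(u, v)}) ↑T1 :=
      gp_del_of_gp hG huv hS (fun x hx => (hmem1 x hx).1)
        (fun x hx y hy => iff_of_true (hmem1 x hx).2 (hmem1 y hy).2)
    have h2 : IsGPSet (G.deleteEdges {s(u, v)}) ↑T2 :=
      gp_del_of_gp hG huv hS (fun x hx => (hmem2 x hx).1)
        (fun x hx y hy => iff_of_false (hmem2 x hx).2 (hmem2 y hy).2)
    have hsum : T1.card + T2.card = S.card :=
      Finset.card_filter_add_card_filter_not (fun s => G.dist s u < G.dist s v)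
    have hc1 := card_le_gpNum h1
    have hc2 := card_le_gpNum h2
    omega
  · obtain ⟨S, hS, hcard⟩ := gpNum_spec (G.deleteEdges {s(u, v)})
    set T1 := S.filter (fun s => G.dist s u < G.dist s v) with hT1
    set T2 := S.filter (fun s => ¬ G.dist s u < G.dist s v) with hT2
    have hmem1 : ∀ x ∈ (T1 : Set V), x ∈ (S : Set V) ∧ G.dist x u < G.dist x v := by
      intro x hx
      simp only [hT1, Finset.coe_filter, Set.mem_setOf_eq] at hx
      exact ⟨hx.1, hx.2⟩
    have hmem2 : ∀ x ∈ (T2 : Set V), x ∈ (S : Set V) ∧ ¬ G.dist x u < G.dist x v := by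
      intro x hx
      simp only [hT2, Finset.coe_filter, Set.mem_setOf_eq] at hx
      exact ⟨hx.1, hx.2⟩
    have h1 : IsGPSet G ↑T1 :=
      gp_of_gp_del hG huv hS (fun x hx => (hmem1 x hx).1)
        (fun x hx y hy => iff_of_true (hmem1 x hx).2 (hmem1 y hy).2)
    have h2 : IsGPSet G ↑T2 :=
      gp_of_gp_del hG huv hS (fun x hx => (hmem2 x hx).1)
        (fun x hx y hy => iff_of_false (hmem2 x hx).2 (hmem2 y hy).2)
    have hsum : T1.card + T2.card = S.card :=
      Finset.card_filter_add_card_filter_not (fun s => G.dist s u < G.dist s v)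
    have hc1 := card_le_gpNum h1
    have hc2 := card_le_gpNum h2
    omega
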